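/- There is an absolute constant c > 0 such that the following holds for every integer d ≥ 2. Let A ∈ ℝ^{d×d} be a positive semidefinite matrix with A_{ii} = 1 for all i and A_{ij} ≥ −1/2 for all i, j, and let w ∈ ℝ^d have nonnegative entries. Then Σ_{i,j=1}^{d} w_i w_j · arcsin(A_{ij}) ≥ c · ‖w‖₁² / (d · √(log d)). -/

import Mathlib

/-! For `|x| ≤ 1`, `arcsin x = ∑ₖ cₖ x ^ (2k+1)` with `cₖ = C(2k, k) / (4 ^ k (2k + 1)) > 0`, so
`∑ᵢⱼ wᵢ wⱼ arcsin Aᵢⱼ = ∑ₖ cₖ Qₖ`, where `Qₖ = ∑ᵢⱼ wᵢ wⱼ Aᵢⱼ ^ (2k+1)` is the quadratic form of an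
entrywise power of `A`, nonnegative by the Schur product theorem. Off the diagonal
`Aᵢⱼ ^ (2k+1) ≥ -2 ^ (-2k-1)`, so once `4 ^ k ≥ d` the diagonal dominates and Cauchy–Schwarz gives
`Qₖ ≥ ‖w‖₁² / (2d)`. With `K = ⌊log₂ d⌋`, the `K + 1` terms `K ≤ k ≤ 2K` have `cₖ ≳ K ^ (-3/2)`,
which adds up to `‖w‖₁² / (d √K)`.

Only truncations of the series are used: they stay below `arcsin` on `[0, 1]` and exceed it by at
most `4 ^ (-N)` on `[-1/2, 0]`. Both bounds come from the derivative of
`(∑_{k ≤ N} bₖ t ^ (2k)) √(1 - t²)`, `bₖ = C(2k, k) / 4 ^ k`, being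
`-(2N + 1) b_N t ^ (2N+1) / √(1 - t²)`. -/

open Real Finset Set

/-- `1 / √(1 - t²) = ∑ arcsinCoeff k * t ^ (2k)` and
`arcsin x = ∑ arcsinCoeff k / (2k + 1) * x ^ (2k + 1)` for `|t|, |x| < 1`. -/
noncomputable def arcsinCoeff (k : ℕ) : ℝ := k.centralBinom / 4 ^ k

lemma arcsinCoeff_pos (k : ℕ) : 0 < arcsinCoeff k := by
  unfold arcsinCoeff
  have := k.centralBinom_pos
  positivity

lemma arcsinCoeff_le_one (k : ℕ) : arcsinCoeff k ≤ 1 := by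
  unfold arcsinCoeff
  rw [div_le_one (by positivity)]
  exact_mod_cast k.centralBinom_le_four_pow

lemma two_mul_add_two_mul_arcsinCoeff_succ (k : ℕ) :
    (2 * k + 2) * arcsinCoeff (k + 1) = (2 * k + 1) * arcsinCoeff k := by
  have h : ((k : ℝ) + 1) * (k + 1).centralBinom = 2 * (2 * k + 1) * k.centralBinom := by
    exact_mod_cast k.succ_mul_centralBinom_succ
  unfold arcsinCoeff
  rw [pow_succ]
  field_simp
  linear_combination 2 * h

lemma arcsinCoeff_antitone : Antitone arcsinCoeff := by
  refine antitone_nat_of_succ_le fun k => ?_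
  have := two_mul_add_two_mul_arcsinCoeff_succ k
  nlinarith [arcsinCoeff_pos k, arcsinCoeff_pos (k + 1)]

lemma one_le_four_mul_arcsinCoeff_sq {k : ℕ} (hk : 1 ≤ k) : 1 ≤ 4 * k * arcsinCoeff k ^ 2 := by
  induction k, hk using Nat.le_induction with
  | base => norm_num [arcsinCoeff, Nat.centralBinom]
  | succ k hk ih =>
    have hrec := two_mul_add_two_mul_arcsinCoeff_succ k
    have hk' : (1 : ℝ) ≤ k := by exact_mod_cast hk
    have hsq : (2 * (k : ℝ) + 2) ^ 2 * arcsinCoeff (k + 1) ^ 2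
        = (2 * k + 1) ^ 2 * arcsinCoeff k ^ 2 := by
      rw [← mul_pow, hrec, mul_pow]
    push_cast
    nlinarith [sq_nonneg (arcsinCoeff k), sq_nonneg (arcsinCoeff (k + 1))]

noncomputable def invSqrtPoly (N : ℕ) (t : ℝ) : ℝ :=
  ∑ k ∈ range (N + 1), arcsinCoeff k * t ^ (2 * k)

noncomputable def arcsinPoly (N : ℕ) (x : ℝ) : ℝ :=
  ∑ k ∈ range (N + 1), arcsinCoeff k / (2 * k + 1) * x ^ (2 * k + 1)

lemma arcsinPoly_neg (N : ℕ) (x : ℝ) : arcsinPoly N (-x) = -arcsinPoly N x := by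
  simp only [arcsinPoly, ← sum_neg_distrib, (odd_two_mul_add_one _).neg_pow, mul_neg]

lemma arcsinPoly_zero_right (N : ℕ) : arcsinPoly N 0 = 0 := by
  simp [arcsinPoly]

lemma hasDerivAt_arcsinPoly (N : ℕ) (x : ℝ) : HasDerivAt (arcsinPoly N) (invSqrtPoly N x) x := by
  refine HasDerivAt.fun_sum fun k _ => ?_
  refine ((hasDerivAt_pow (2 * k + 1) x).const_mul (arcsinCoeff k / (2 * k + 1))).congr_deriv ?_
  push_cast
  field_simp

lemma hasDerivAt_sqrt_one_sub_sq {t : ℝ} (ht : t ^ 2 < 1) :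
    HasDerivAt (fun s => √(1 - s ^ 2)) (-t / √(1 - t ^ 2)) t := by
  have h := ((hasDerivAt_pow 2 t).const_sub 1).sqrt (by linarith)
  convert h using 1
  field_simp
  ring

/-- The identity `(2k + 2) b_{k+1} = (2k + 1) b_k` makes the derivative telescope. -/
lemma hasDerivAt_invSqrtPoly_mul_sqrt (N : ℕ) {t : ℝ} (ht : t ^ 2 < 1) :
    HasDerivAt (fun s => invSqrtPoly N s * √(1 - s ^ 2))
      (-((2 * N + 1) * arcsinCoeff N * t ^ (2 * N + 1)) / √(1 - t ^ 2)) t := by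
  have hs : 0 < √(1 - t ^ 2) := Real.sqrt_pos.2 (by linarith)
  have hsq : √(1 - t ^ 2) ^ 2 = 1 - t ^ 2 := Real.sq_sqrt (by linarith)
  induction N with
  | zero =>
    simpa [invSqrtPoly, arcsinCoeff] using hasDerivAt_sqrt_one_sub_sq ht
  | succ N ih =>
    have hsplit : (fun s => invSqrtPoly (N + 1) s * √(1 - s ^ 2)) = fun s =>
        invSqrtPoly N s * √(1 - s ^ 2) + arcsinCoeff (N + 1) * s ^ (2 * N + 2) * √(1 - s ^ 2) := by
      funext s
      rw [invSqrtPoly, sum_range_succ, ← invSqrtPoly]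
      ring
    rw [hsplit]
    have hnew := ((hasDerivAt_pow (2 * N + 2) t).const_mul (arcsinCoeff (N + 1))).mul
      (hasDerivAt_sqrt_one_sub_sq ht)
    refine (ih.add hnew).congr_deriv ?_
    have hrec := two_mul_add_two_mul_arcsinCoeff_succ N
    simp only [show 2 * N + 2 - 1 = 2 * N + 1 by omega,
      show 2 * (N + 1) + 1 = 2 * N + 1 + 2 by omega]
    push_cast
    field_simp
    rw [hsq]
    linear_combination t ^ (2 * N + 1) * hrec

lemma le_of_hasDerivAt_nonneg {f f' : ℝ → ℝ} {a b : ℝ} (hab : a ≤ b)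
    (hf : ContinuousOn f (Icc a b)) (hf' : ∀ x ∈ Ioo a b, HasDerivAt f (f' x) x)
    (hpos : ∀ x ∈ Ioo a b, 0 ≤ f' x) : f a ≤ f b := by
  refine monotoneOn_of_hasDerivWithinAt_nonneg (f' := f') (convex_Icc a b) hf
    (fun x hx => ?_) (fun x hx => ?_) (left_mem_Icc.2 hab) (right_mem_Icc.2 hab) hab
  · rw [interior_Icc] at hx
    exact (hf' x hx).hasDerivWithinAt
  · rw [interior_Icc] at hx
    exact hpos x hx

lemma invSqrtPoly_zero_right (N : ℕ) : invSqrtPoly N 0 = 1 := by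
  simp [invSqrtPoly, sum_range_succ', arcsinCoeff]

lemma sq_lt_one_of_mem_Icc {t a : ℝ} (ha : a < 1) (ht : t ∈ Icc 0 a) : t ^ 2 < 1 := by
  nlinarith [ht.1, ht.2]

lemma invSqrtPoly_mul_sqrt_le_one (N : ℕ) {t : ℝ} (h0 : 0 ≤ t) (h1 : t < 1) :
    invSqrtPoly N t * √(1 - t ^ 2) ≤ 1 := by
  have hderiv : ∀ y ∈ Icc 0 t, HasDerivAt (fun s => -(invSqrtPoly N s * √(1 - s ^ 2)))
      (-(-((2 * N + 1) * arcsinCoeff N * y ^ (2 * N + 1)) / √(1 - y ^ 2))) y :=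
    fun y hy => (hasDerivAt_invSqrtPoly_mul_sqrt N (sq_lt_one_of_mem_Icc h1 hy)).neg
  have h := le_of_hasDerivAt_nonneg h0
    (fun y hy => (hderiv y hy).continuousAt.continuousWithinAt)
    (fun y hy => hderiv y (Ioo_subset_Icc_self hy))
    (fun y hy => by
      have := arcsinCoeff_pos N
      have := hy.1
      rw [neg_div, neg_neg]
      positivity)
  simpa [invSqrtPoly_zero_right] using h

lemma half_le_sqrt_one_sub_sq {t : ℝ} (h0 : 0 ≤ t) (h1 : t ≤ 1 / 2) : 1 / 2 ≤ √(1 - t ^ 2) :=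
  Real.le_sqrt_of_sq_le (by nlinarith)

lemma one_sub_two_mul_pow_le_invSqrtPoly_mul_sqrt (N : ℕ) {t : ℝ} (h0 : 0 ≤ t) (h1 : t ≤ 1 / 2) :
    1 - 2 * t ^ (2 * N + 2) ≤ invSqrtPoly N t * √(1 - t ^ 2) := by
  have hderiv : ∀ y ∈ Icc 0 t, HasDerivAt
      (fun s => invSqrtPoly N s * √(1 - s ^ 2) - (1 - 2 * s ^ (2 * N + 2)))
      (-((2 * N + 1) * arcsinCoeff N * y ^ (2 * N + 1)) / √(1 - y ^ 2)
        + 2 * (2 * N + 2) * y ^ (2 * N + 1)) y := by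
    intro y hy
    refine ((hasDerivAt_invSqrtPoly_mul_sqrt N (sq_lt_one_of_mem_Icc (by linarith) hy)).sub
      (((hasDerivAt_pow (2 * N + 2) y).const_mul 2).const_sub 1)).congr_deriv ?_
    simp only [show 2 * N + 2 - 1 = 2 * N + 1 by omega]
    push_cast
    ring
  have h := le_of_hasDerivAt_nonneg h0
    (fun y hy => (hderiv y hy).continuousAt.continuousWithinAt)
    (fun y hy => hderiv y (Ioo_subset_Icc_self hy))
    (fun y hy => by
      have hy0 : 0 ≤ y := hy.1.le
      have hs := half_le_sqrt_one_sub_sq hy0 (by linarith [hy.2])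
      have hcoeff : arcsinCoeff N / √(1 - y ^ 2) ≤ 2 := by
        rw [div_le_iff₀ (by linarith)]
        nlinarith [arcsinCoeff_le_one N]
      have hpow : 0 ≤ y ^ (2 * N + 1) := by positivity
      rw [neg_div, neg_add_eq_sub, sub_nonneg,
        show (2 * N + 1) * arcsinCoeff N * y ^ (2 * N + 1) / √(1 - y ^ 2)
          = (2 * N + 1) * y ^ (2 * N + 1) * (arcsinCoeff N / √(1 - y ^ 2)) by ring]
      nlinarith [mul_le_mul_of_nonneg_left hcoeff
        (by positivity : (0 : ℝ) ≤ (2 * N + 1) * y ^ (2 * N + 1))])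
  simpa [invSqrtPoly_zero_right] using h

lemma invSqrtPoly_le_one_div_sqrt (N : ℕ) {t : ℝ} (h0 : 0 ≤ t) (h1 : t < 1) :
    invSqrtPoly N t ≤ 1 / √(1 - t ^ 2) := by
  rw [le_div_iff₀ (Real.sqrt_pos.2 (by nlinarith))]
  exact invSqrtPoly_mul_sqrt_le_one N h0 h1

lemma one_div_sqrt_sub_invSqrtPoly_le (N : ℕ) {t : ℝ} (h0 : 0 ≤ t) (h1 : t ≤ 1 / 2) :
    1 / √(1 - t ^ 2) - invSqrtPoly N t ≤ (1 / 4) ^ N := by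
  have hs := half_le_sqrt_one_sub_sq h0 h1
  have hg := one_sub_two_mul_pow_le_invSqrtPoly_mul_sqrt N h0 h1
  have hpow : t ^ (2 * N + 2) ≤ (1 / 4) ^ (N + 1) := by
    rw [show 2 * N + 2 = 2 * (N + 1) by ring, pow_mul]
    exact pow_le_pow_left₀ (by positivity) (by nlinarith) _
  rw [sub_le_iff_le_add, div_le_iff₀ (by linarith)]
  have : (1 / 4 : ℝ) ^ (N + 1) * 4 = (1 / 4) ^ N := by rw [pow_succ]; ring
  nlinarith [pow_nonneg (show (0 : ℝ) ≤ 1 / 4 by norm_num) N]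

lemma continuous_arcsinPoly (N : ℕ) : Continuous (arcsinPoly N) :=
  continuous_iff_continuousAt.2 fun x => (hasDerivAt_arcsinPoly N x).continuousAt

lemma arcsinPoly_le_arcsin (N : ℕ) {x : ℝ} (h0 : 0 ≤ x) (h1 : x ≤ 1) :
    arcsinPoly N x ≤ arcsin x := by
  have h := le_of_hasDerivAt_nonneg (f := fun y => arcsin y - arcsinPoly N y) h0
    (continuous_arcsin.sub (continuous_arcsinPoly N)).continuousOn
    (fun y hy => (hasDerivAt_arcsin (by linarith [hy.1]) (by linarith [hy.2])).sub
      (hasDerivAt_arcsinPoly N y))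
    (fun y hy => sub_nonneg.2 (invSqrtPoly_le_one_div_sqrt N hy.1.le (by linarith [hy.2])))
  simpa [arcsinPoly_zero_right] using h

lemma arcsin_sub_arcsinPoly_le (N : ℕ) {x : ℝ} (h0 : 0 ≤ x) (h1 : x ≤ 1 / 2) :
    arcsin x - arcsinPoly N x ≤ (1 / 4) ^ N := by
  have h := le_of_hasDerivAt_nonneg (f := fun y => (1 / 4) ^ N * y - (arcsin y - arcsinPoly N y))
    h0 ((continuous_const_mul _).sub (continuous_arcsin.sub (continuous_arcsinPoly N))).continuousOn
    (fun y hy => ((hasDerivAt_id y).const_mul _).sub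
      ((hasDerivAt_arcsin (by linarith [hy.1]) (by linarith [hy.2])).sub
        (hasDerivAt_arcsinPoly N y)))
    (fun y hy => by
      simpa using one_div_sqrt_sub_invSqrtPoly_le N hy.1.le (by linarith [hy.2]))
  have hpow : 0 ≤ (1 / 4 : ℝ) ^ N := by positivity
  simp only [arcsin_zero, arcsinPoly_zero_right, mul_zero, sub_zero] at h
  nlinarith

lemma arcsinPoly_sub_le_arcsin (N : ℕ) {x : ℝ} (h0 : -(1 / 2) ≤ x) (h1 : x ≤ 1) :
    arcsinPoly N x - (1 / 4) ^ N ≤ arcsin x := by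
  rcases le_total 0 x with hx | hx
  · linarith [arcsinPoly_le_arcsin N hx h1, pow_nonneg (show (0 : ℝ) ≤ 1 / 4 by norm_num) N]
  · have h := arcsin_sub_arcsinPoly_le N (neg_nonneg.2 hx) (by linarith)
    rw [arcsin_neg, arcsinPoly_neg] at h
    linarith

namespace Matrix

variable {ι : Type*}

lemma PosSemidef.two_mul_apply_le [Fintype ι] {A : Matrix ι ι ℝ} (hA : A.PosSemidef) (i j : ι) :
    2 * A i j ≤ A i i + A j j := by
  classical
  have hsym : A j i = A i j := by simpa using hA.isHermitian.apply i j
  have h := hA.dotProduct_mulVec_nonneg (Pi.single i 1 - Pi.single j 1)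
  simp only [star_trivial, mulVec_sub, mulVec_single_one, col_apply, dotProduct_sub,
    sub_dotProduct, single_dotProduct, one_mul] at h
  linarith

lemma PosSemidef.map_pow [Finite ι] {A : Matrix ι ι ℝ} (hA : A.PosSemidef) (m : ℕ) :
    (A.map (· ^ m)).PosSemidef := by
  induction m with
  | zero =>
    have h : A.map (· ^ 0) = vecMulVec (fun _ => 1) (star fun _ => 1) := by
      ext i j
      simp [vecMulVec_apply]
    exact h ▸ posSemidef_vecMulVec_self_star _
  | succ m ih =>
    have h : A.map (· ^ (m + 1)) = A.map (· ^ m) ⊙ A := by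
      ext i j
      simp [pow_succ]
    exact h ▸ ih.hadamard hA

lemma PosSemidef.sum_mul_mul_nonneg [Fintype ι] {M : Matrix ι ι ℝ} (hM : M.PosSemidef)
    (w : ι → ℝ) : 0 ≤ ∑ i, ∑ j, w i * w j * M i j := by
  have h := hM.dotProduct_mulVec_nonneg w
  simp only [star_trivial, dotProduct, mulVec, mul_sum] at h
  exact h.trans_eq (sum_congr rfl fun i _ => sum_congr rfl fun j _ => by ring)

end Matrix

section QuadraticForm

variable {ι : Type*} [Fintype ι]

lemma sum_sq_sub_mul_sq_sum_le {x : ι → ι → ℝ} {w : ι → ℝ} {β : ℝ} (hβ : 0 ≤ β)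
    (hw : ∀ i, 0 ≤ w i) (hdiag : ∀ i, x i i = 1) (hx : ∀ i j, -β ≤ x i j) :
    ∑ i, w i ^ 2 - β * (∑ i, w i) ^ 2 ≤ ∑ i, ∑ j, w i * w j * x i j := by
  have hdrop : ∑ i, w i * w i * (x i i + β) ≤ ∑ i, ∑ j, w i * w j * (x i j + β) :=
    sum_le_sum fun i _ => single_le_sum (f := fun j => w i * w j * (x i j + β))
      (fun j _ => mul_nonneg (mul_nonneg (hw i) (hw j)) (by linarith [hx i j])) (mem_univ i)
  have hexpand : ∑ i, ∑ j, w i * w j * (x i j + β)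
      = ∑ i, ∑ j, w i * w j * x i j + β * (∑ i, w i) ^ 2 := by
    simp only [mul_add, sum_add_distrib]
    congr 1
    rw [sq, sum_mul_sum, mul_sum]
    simp only [mul_sum]
    exact sum_congr rfl fun i _ => sum_congr rfl fun j _ => by ring
  simp only [hdiag, hexpand] at hdrop
  have : ∑ i, w i * w i * (1 + β) = (1 + β) * ∑ i, w i ^ 2 := by
    rw [mul_sum]; exact sum_congr rfl fun i _ => by ring
  nlinarith [(sum_nonneg fun i _ => sq_nonneg (w i) : 0 ≤ ∑ i, w i ^ 2)]

lemma sq_sum_le_two_mul_card_mul_sum_mul_mul_pow {A : Matrix ι ι ℝ} {w : ι → ℝ}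
    (hdiag : ∀ i, A i i = 1) (hlow : ∀ i j, -(1 / 2) ≤ A i j) (hw : ∀ i, 0 ≤ w i) {k : ℕ}
    (hk : Fintype.card ι ≤ 4 ^ k) :
    (∑ i, w i) ^ 2 ≤ 2 * Fintype.card ι * ∑ i, ∑ j, w i * w j * A i j ^ (2 * k + 1) := by
  have hodd : Odd (2 * k + 1) := odd_two_mul_add_one k
  have hpow : ∀ i j, -(1 / 2) ^ (2 * k + 1) ≤ A i j ^ (2 * k + 1) := fun i j => by
    rw [← hodd.neg_pow]
    exact hodd.strictMono_pow.monotone (hlow i j)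
  have h := sum_sq_sub_mul_sq_sum_le (by positivity) hw (by simp [hdiag]) hpow
  have hcs : (∑ i, w i) ^ 2 ≤ Fintype.card ι * ∑ i, w i ^ 2 := sq_sum_le_card_mul_sum_sq
  have hβ : 2 * (Fintype.card ι : ℝ) * (1 / 2) ^ (2 * k + 1) ≤ 1 := by
    rw [pow_succ, pow_mul]
    have : (Fintype.card ι : ℝ) * (1 / 2 ^ 2) ^ k ≤ 1 := by
      rw [div_pow, one_pow, ← div_eq_mul_one_div, div_le_one (by positivity)]
      exact_mod_cast hk
    linarith
  nlinarith [sq_nonneg (∑ i, w i)]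

end QuadraticForm

open Filter Topology in
lemma sum_arcsinCoeff_mul_sum_pow_le_sum_arcsin {ι : Type*} [Fintype ι]
    {A : Matrix ι ι ℝ} {w : ι → ℝ} (hA : A.PosSemidef) (hle : ∀ i j, A i j ≤ 1)
    (hlow : ∀ i j, -(1 / 2) ≤ A i j) (hw : ∀ i, 0 ≤ w i) (s : Finset ℕ) :
    ∑ k ∈ s, arcsinCoeff k / (2 * k + 1) * ∑ i, ∑ j, w i * w j * A i j ^ (2 * k + 1)
      ≤ ∑ i, ∑ j, w i * w j * arcsin (A i j) := by
  set X := ∑ i, ∑ j, w i * w j * arcsin (A i j)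
  have htrunc : ∀ N, ∑ k ∈ range (N + 1),
      arcsinCoeff k / (2 * k + 1) * ∑ i, ∑ j, w i * w j * A i j ^ (2 * k + 1)
        ≤ X + (1 / 4) ^ N * (∑ i, w i) ^ 2 := fun N =>
    calc _ = ∑ i, ∑ j, w i * w j * arcsinPoly N (A i j) := by
          simp only [arcsinPoly, mul_sum]
          rw [sum_comm]
          refine sum_congr rfl fun i _ => ?_
          rw [sum_comm]
          exact sum_congr rfl fun j _ => sum_congr rfl fun k _ => by ring
      _ ≤ ∑ i, ∑ j, w i * w j * (arcsin (A i j) + (1 / 4) ^ N) :=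
          sum_le_sum fun i _ => sum_le_sum fun j _ =>
            mul_le_mul_of_nonneg_left
              (sub_le_iff_le_add.1 (arcsinPoly_sub_le_arcsin N (hlow i j) (hle i j)))
              (mul_nonneg (hw i) (hw j))
      _ = X + (1 / 4) ^ N * (∑ i, w i) ^ 2 := by
          simp only [mul_add, sum_add_distrib, ← sum_mul, ← mul_sum, sq]
          ring
  have hlim : Tendsto (fun N => X + (1 / 4 : ℝ) ^ N * (∑ i, w i) ^ 2) atTop (𝓝 X) := by
    have h := tendsto_pow_atTop_nhds_zero_of_lt_one (r := (1 / 4 : ℝ)) (by norm_num) (by norm_num)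
    simpa using tendsto_const_nhds.add (h.mul_const _)
  refine ge_of_tendsto hlim (eventually_atTop.2 ⟨s.sup id, fun N hN => ?_⟩)
  refine le_trans (sum_le_sum_of_subset_of_nonneg (fun k hk => ?_) fun k _ _ => ?_) (htrunc N)
  · exact mem_range.2 (Nat.lt_succ_of_le ((le_sup (f := id) hk).trans hN))
  · exact mul_nonneg (div_nonneg (arcsinCoeff_pos k).le (by positivity))
      ((hA.map_pow (2 * k + 1)).sum_mul_mul_nonneg w)

lemma one_div_sixteen_mul_sqrt_le_sum_arcsinCoeff {K : ℕ} (hK : 1 ≤ K) :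
    1 / (16 * √K) ≤ ∑ k ∈ Finset.Icc K (2 * K), arcsinCoeff k / (2 * k + 1) := by
  set b := arcsinCoeff (2 * K)
  have hmin : ∀ k ∈ Finset.Icc K (2 * K), b / (2 * ↑(2 * K) + 1) ≤ arcsinCoeff k / (2 * k + 1) :=
    fun k hk => div_le_div₀ (arcsinCoeff_pos k).le (arcsinCoeff_antitone (Finset.mem_Icc.1 hk).2)
      (by positivity) (by gcongr; exact (Finset.mem_Icc.1 hk).2)
  have hsum := card_nsmul_le_sum _ _ _ hmin
  rw [Nat.card_Icc, nsmul_eq_mul, show 2 * K + 1 - K = K + 1 by omega] at hsum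
  refine le_trans ?_ hsum
  have hb := one_le_four_mul_arcsinCoeff_sq (k := 2 * K) (by omega)
  have hb0 : 0 < b := arcsinCoeff_pos _
  have hs : 0 < √(K : ℝ) := Real.sqrt_pos.2 (by exact_mod_cast hK)
  have hsq : √(K : ℝ) ^ 2 = K := Real.sq_sqrt (Nat.cast_nonneg K)
  have h3 : 1 ≤ 3 * (√K * b) := by
    push_cast at hb
    nlinarith [mul_pos hs hb0]
  rw [div_le_iff₀ (by positivity)]
  push_cast
  rw [mul_div_assoc', div_mul_eq_mul_div, le_div_iff₀ (by positivity)]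
  nlinarith

lemma sqrt_natLog_two_le_two_mul_sqrt_log {d : ℕ} (hd : 2 ≤ d) : √(Nat.log 2 d) ≤ 2 * √(log d) := by
  have h := Real.log_le_log (by positivity)
    (show (2 : ℝ) ^ Nat.log 2 d ≤ d by exact_mod_cast Nat.pow_log_le_self 2 (by omega))
  rw [Real.log_pow] at h
  rw [Real.sqrt_le_left (by positivity), mul_pow, Real.sq_sqrt (h.trans' (by positivity))]
  nlinarith [Real.log_two_gt_d9, (Nat.log 2 d).cast_nonneg (α := ℝ)]

lemma le_four_pow_log_two {d : ℕ} (hd : 2 ≤ d) : d ≤ 4 ^ Nat.log 2 d := by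
  refine (Nat.lt_pow_succ_log_self one_lt_two d).le.trans ?_
  rw [show 4 = 2 ^ 2 by rfl, ← pow_mul]
  exact Nat.pow_le_pow_right two_pos (by have := Nat.log_pos one_lt_two hd; omega)

/-- There is an absolute constant `c > 0` such that for every integer `d ≥ 2`, every
positive semidefinite `A ∈ ℝ^{d×d}` with unit diagonal and entries `≥ -1/2`, and every
nonnegative `w ∈ ℝ^d`, one has
`Σ_{i,j} w_i w_j arcsin(A_{ij}) ≥ c · ‖w‖₁² / (d · √(log d))`. -/
theorem sum_arcsin_psd_lower_bound :
    ∃ c : ℝ, c > 0 ∧ ∀ d : ℕ, 2 ≤ d → ∀ A : Matrix (Fin d) (Fin d) ℝ,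
      A.PosSemidef → (∀ i, A i i = 1) → (∀ i j, A i j ≥ -(1 / 2)) →
      ∀ w : Fin d → ℝ, (∀ i, 0 ≤ w i) →
        ∑ i, ∑ j, w i * w j * Real.arcsin (A i j) ≥
          c * (∑ i, |w i|) ^ 2 / (d * Real.sqrt (Real.log d)) := by
  refine ⟨1 / 64, by norm_num, fun d hd A hA hdiag hlow w hw => ?_⟩
  set K := Nat.log 2 d
  have hK : 1 ≤ K := Nat.log_pos one_lt_two hd
  have hquad : ∀ k ∈ Finset.Icc K (2 * K),
      (∑ i, w i) ^ 2 / (2 * d) ≤ ∑ i, ∑ j, w i * w j * A i j ^ (2 * k + 1) := fun k hk => by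
    have hdk := (le_four_pow_log_two hd).trans (Nat.pow_le_pow_right four_pos (mem_Icc.1 hk).1)
    rw [div_le_iff₀ (by positivity), mul_comm]
    simpa using sq_sum_le_two_mul_card_mul_sum_mul_mul_pow hdiag hlow hw (by simpa using hdk)
  have hle : ∀ i j, A i j ≤ 1 := fun i j => by
    linarith [hA.two_mul_apply_le i j, hdiag i, hdiag j]
  rw [ge_iff_le, show ∑ i, |w i| = ∑ i, w i from sum_congr rfl fun i _ => abs_of_nonneg (hw i)]
  calc 1 / 64 * (∑ i, w i) ^ 2 / (d * √(log d))
      = 1 / (16 * (2 * √(log d))) * ((∑ i, w i) ^ 2 / (2 * d)) := by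
        field_simp
        ring
    _ ≤ 1 / (16 * √K) * ((∑ i, w i) ^ 2 / (2 * d)) := by
        gcongr
        exact sqrt_natLog_two_le_two_mul_sqrt_log hd
    _ ≤ ∑ k ∈ Finset.Icc K (2 * K), arcsinCoeff k / (2 * k + 1) * ((∑ i, w i) ^ 2 / (2 * d)) := by
        rw [← sum_mul]
        gcongr
        exact one_div_sixteen_mul_sqrt_le_sum_arcsinCoeff hK
    _ ≤ ∑ k ∈ Finset.Icc K (2 * K),
          arcsinCoeff k / (2 * k + 1) * ∑ i, ∑ j, w i * w j * A i j ^ (2 * k + 1) :=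
        sum_le_sum fun k hk => mul_le_mul_of_nonneg_left (hquad k hk)
          (div_nonneg (arcsinCoeff_pos k).le (by positivity))
    _ ≤ ∑ i, ∑ j, w i * w j * arcsin (A i j) :=
        sum_arcsinCoeff_mul_sum_pow_le_sum_arcsin hA hle hlow hw _
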